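/- arXiv:1601.03272 — 2 statements merged into one kernel-verified Lean document; each statement's English description precedes it below -/
import Mathlib

section
/- Let p ∈ (1, 2], c₃ > 0, and let F : ℝ → ℝ be differentiable with |F'(s)|^p ≤ c₃(|F(s)| + 1) for all s ∈ ℝ. Then there exist constants c₄ > 0 and c₅ ≥ 0 such that |F(s)| ≤ c₄|s|^{p'} + c₅ for all s ∈ ℝ, where p' = p/(p − 1) is the conjugate exponent of p. -/
/-- (H4) implies polynomial growth of order `p' = p/(p−1)`. -/
theorem stmt3 (F F' : ℝ → ℝ) (hF' : ∀ s, HasDerivAt F (F' s) s)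
    (p c₃ : ℝ) (hp₁ : 1 < p) (hp₂ : p ≤ 2) (hc₃ : 0 < c₃)
    (hH4 : ∀ s : ℝ, |F' s| ^ p ≤ c₃ * (|F s| + 1)) :
    ∃ c₄ > (0 : ℝ), ∃ c₅ ≥ (0 : ℝ),
      ∀ s : ℝ, |F s| ≤ c₄ * |s| ^ (p / (p - 1)) + c₅ := by
  have hp0 : (0:ℝ) < p := lt_trans one_pos hp₁
  have hp1 : (0:ℝ) < p - 1 := sub_pos.mpr hp₁
  set q : ℝ := p / (p - 1) with hq_def
  set α : ℝ := (p - 1) / (2 * p) with hα_def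
  have hq0 : 0 < q := div_pos hp0 hp1
  have hα0 : 0 < α := div_pos hp1 (by linarith)
  have hαq : α * q = 1/2 := by
    rw [hα_def, hq_def]; field_simp
  set G : ℝ → ℝ := fun s => F s ^ 2 + 1 with hG_def
  have hG1 : ∀ s, 1 ≤ G s := fun s => by
    show (1:ℝ) ≤ F s ^ 2 + 1
    nlinarith [sq_nonneg (F s)]
  have hG0 : ∀ s, 0 < G s := fun s => lt_of_lt_of_le one_pos (hG1 s)
  -- |F s| ≤ G s ^ (1/2)
  have hFle : ∀ s, |F s| ≤ G s ^ ((1:ℝ)/2) := by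
    intro s
    rw [← Real.sqrt_eq_rpow, ← Real.sqrt_sq_eq_abs]
    exact Real.sqrt_le_sqrt (by show F s ^ 2 ≤ F s ^ 2 + 1; linarith)
  have hone_le : ∀ s, (1:ℝ) ≤ G s ^ ((1:ℝ)/2) := by
    intro s
    rw [← Real.sqrt_eq_rpow]
    exact Real.one_le_sqrt.mpr (hG1 s)
  -- bound on |F'|
  have hF'bd : ∀ s, |F' s| ≤ (2 * c₃ * G s ^ ((1:ℝ)/2)) ^ (1/p) := by
    intro s
    have h1 : |F' s| ^ p ≤ 2 * c₃ * G s ^ ((1:ℝ)/2) := by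
      calc |F' s| ^ p ≤ c₃ * (|F s| + 1) := hH4 s
        _ ≤ c₃ * (G s ^ ((1:ℝ)/2) + G s ^ ((1:ℝ)/2)) := by
            gcongr; exacts [hFle s, hone_le s]
        _ = 2 * c₃ * G s ^ ((1:ℝ)/2) := by ring
    have h2 : |F' s| = (|F' s| ^ p) ^ (1/p) := by
      rw [← Real.rpow_mul (abs_nonneg _), mul_one_div, div_self hp0.ne', Real.rpow_one]
    rw [h2]
    exact Real.rpow_le_rpow (Real.rpow_nonneg (abs_nonneg _) _) h1 (by positivity)
  set u : ℝ → ℝ := fun s => G s ^ α with hu_def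
  have hGd : ∀ s, HasDerivAt G (2 * F s * F' s) s := by
    intro s
    have := ((hF' s).pow 2).add_const 1
    simpa [hG_def, mul_comm, mul_assoc, mul_left_comm] using this
  have hud : ∀ s, HasDerivAt u ((2 * F s * F' s) * α * G s ^ (α - 1)) s := fun s =>
    (hGd s).rpow_const (Or.inl (hG0 s).ne')
  set K : ℝ := 2 * α * (2 * c₃) ^ (1/p) with hK_def
  have hK0 : 0 < K := by positivity
  -- derivative bound
  have hubd : ∀ s, ‖(2 * F s * F' s) * α * G s ^ (α - 1)‖ ≤ K := by
    intro s
    have hg := hG0 s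
    have habs : ‖(2 * F s * F' s) * α * G s ^ (α - 1)‖
        = |2 * F s * F' s| * α * G s ^ (α - 1) := by
      rw [Real.norm_eq_abs, abs_mul, abs_mul, abs_of_pos hα0,
        abs_of_pos (Real.rpow_pos_of_pos hg _)]
    rw [habs]
    have h1 : |2 * F s * F' s| ≤ 2 * G s ^ ((1:ℝ)/2) * ((2 * c₃) ^ (1/p) * G s ^ ((1/2) * (1/p))) := by
      have : (2 * c₃ * G s ^ ((1:ℝ)/2)) ^ (1/p)
          = (2 * c₃) ^ (1/p) * G s ^ ((1/2) * (1/p)) := by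
        rw [Real.mul_rpow (by positivity) (by positivity), ← Real.rpow_mul hg.le]
      calc |2 * F s * F' s| = 2 * |F s| * |F' s| := by
            rw [abs_mul, abs_mul, abs_two]
        _ ≤ 2 * G s ^ ((1:ℝ)/2) * ((2 * c₃ * G s ^ ((1:ℝ)/2)) ^ (1/p)) :=
            mul_le_mul (by gcongr; exact hFle s) (hF'bd s) (abs_nonneg _) (by positivity)
        _ = _ := by rw [this]
    calc |2 * F s * F' s| * α * G s ^ (α - 1)
        ≤ 2 * G s ^ ((1:ℝ)/2) * ((2 * c₃) ^ (1/p) * G s ^ ((1/2) * (1/p))) * α * G s ^ (α - 1) := by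
          have := (Real.rpow_pos_of_pos hg (α - 1)).le
          gcongr
      _ = K * (G s ^ ((1:ℝ)/2) * G s ^ ((1/2) * (1/p)) * G s ^ (α - 1)) := by
          rw [hK_def]; ring
      _ = K * G s ^ ((1:ℝ)/2 + (1/2) * (1/p) + (α - 1)) := by
          rw [← Real.rpow_add hg, ← Real.rpow_add hg]
      _ = K := by
          have he : (1:ℝ)/2 + (1/2) * (1/p) + (α - 1) = 0 := by
            rw [hα_def]; field_simp; ring
          rw [he, Real.rpow_zero, mul_one]
  -- Lipschitz bound
  have hlip : ∀ s : ℝ, u s ≤ u 0 + K * |s| := by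
    intro s
    have h := (convex_univ : Convex ℝ (Set.univ : Set ℝ)).norm_image_sub_le_of_norm_hasDerivWithin_le
      (fun x _ => (hud x).hasDerivWithinAt) (fun x _ => hubd x) (Set.mem_univ 0) (Set.mem_univ s)
    simp only [Real.norm_eq_abs, sub_zero] at h
    have h2 := le_trans (le_abs_self (u s - u 0)) h
    linarith
  refine ⟨2 ^ q * K ^ q, by positivity, 2 ^ q * (u 0) ^ q, by positivity, fun s => ?_⟩
  have hu0 : 0 ≤ u 0 := (Real.rpow_pos_of_pos (hG0 0) _).le
  have hKs : 0 ≤ K * |s| := by positivity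
  have h1 : |F s| ≤ u s ^ q := by
    rw [hu_def]
    simp only
    rw [← Real.rpow_mul (hG0 s).le, hαq]
    exact hFle s
  have h2 : u s ^ q ≤ (u 0 + K * |s|) ^ q :=
    Real.rpow_le_rpow (Real.rpow_pos_of_pos (hG0 s) _).le (hlip s) hq0.le
  have h3 : (u 0 + K * |s|) ^ q ≤ 2 ^ q * (u 0) ^ q + 2 ^ q * (K * |s|) ^ q := by
    rcases le_total (u 0) (K * |s|) with h | h
    · calc (u 0 + K * |s|) ^ q ≤ (2 * (K * |s|)) ^ q :=
            Real.rpow_le_rpow (by linarith) (by linarith) hq0.le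
        _ = 2 ^ q * (K * |s|) ^ q := Real.mul_rpow (by norm_num) hKs
        _ ≤ _ := by nlinarith [Real.rpow_nonneg hu0 q, Real.rpow_pos_of_pos (show (0:ℝ) < 2 by norm_num) q]
    · calc (u 0 + K * |s|) ^ q ≤ (2 * u 0) ^ q :=
            Real.rpow_le_rpow (by linarith) (by linarith) hq0.le
        _ = 2 ^ q * (u 0) ^ q := Real.mul_rpow (by norm_num) hu0
        _ ≤ _ := by nlinarith [Real.rpow_nonneg hKs q, Real.rpow_pos_of_pos (show (0:ℝ) < 2 by norm_num) q]
  have h4 : (K * |s|) ^ q = K ^ q * |s| ^ q := Real.mul_rpow hK0.le (abs_nonneg _)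
  calc |F s| ≤ 2 ^ q * (u 0) ^ q + 2 ^ q * (K * |s|) ^ q := le_trans h1 (le_trans h2 h3)
    _ = 2 ^ q * K ^ q * |s| ^ q + 2 ^ q * (u 0) ^ q := by rw [h4]; ring
end

section
/- Let Ω ⊆ ℝ^d be a measurable set of finite Lebesgue measure, let J ∈ L¹(ℝ^d) be even (J(−x) = J(x) for a.e. x), and set a(x) := ∫_Ω J(x − y) dy; assume a(x) ≥ 0 for a.e. x ∈ Ω. Let q > 0, c₆ > 0, c₇ ≥ 0, and let F : ℝ → ℝ be continuous with F(s) ≥ c₆|s|^{2+2q} − c₇ for all s ∈ ℝ. Then there exist constants α > 0 and c > 0 such that for every φ ∈ L^{2+2q}(Ω) with F∘φ integrable on Ω, (1/2) ∫_Ω ∫_Ω J(x − y)(φ(x) − φ(y))² dy dx + 2 ∫_Ω F(φ(x)) dx ≥ α ( ‖φ‖²_{L²(Ω)} + ∫_Ω F(φ(x)) dx ) − c. -/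
/-!
Expanding the square and using `∫ |J(x - y)| dy ≤ ‖J‖₁` in either variable (translation
invariance), the interaction term is at least `-4 ‖J‖₁ ‖φ‖₂²`. Since `|φ|^(2+2q)` grows faster
than `φ²`, any multiple of `∫ φ²` is bounded by `c₆ ∫ |φ|^(2+2q)` plus a constant times `|Ω|`,
hence by `∫ F(φ)` plus a constant.
-/

open MeasureTheory

lemma mul_le_mul_rpow_one_add_add {A B q t : ℝ} (hA : 0 < A) (hB : 0 < B) (hq : 0 < q)
    (ht : 0 ≤ t) : A * t ≤ B * t ^ (1 + q) + A * (A / B) ^ q⁻¹ := by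
  have hK : 0 ≤ (A / B) ^ q⁻¹ := by positivity
  -- `(A / B) ^ q⁻¹` is the threshold where `B t ^ q = A`.
  rcases le_total t ((A / B) ^ q⁻¹) with hsmall | hlarge
  · have : 0 ≤ B * t ^ (1 + q) := by positivity
    nlinarith
  · have hAB : A / B ≤ t ^ q := by
      calc A / B = ((A / B) ^ q⁻¹) ^ q := by
            rw [← Real.rpow_mul (by positivity), inv_mul_cancel₀ hq.ne', Real.rpow_one]
        _ ≤ t ^ q := by gcongr
    have : A * t ≤ B * t ^ (1 + q) := by
      rw [Real.rpow_one_add' ht (by positivity)]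
      calc A * t = B * (A / B) * t := by field_simp
        _ ≤ B * t ^ q * t := by gcongr
        _ = B * (t * t ^ q) := by ring
    nlinarith

lemma mul_sq_le_mul_abs_rpow_add {A B q : ℝ} (hA : 0 < A) (hB : 0 < B) (hq : 0 < q) (s : ℝ) :
    A * s ^ 2 ≤ B * |s| ^ (2 + 2 * q) + A * (A / B) ^ q⁻¹ := by
  have hs : |s| ^ (2 + 2 * q) = (s ^ 2) ^ (1 + q) := by
    rw [← sq_abs, ← Real.rpow_natCast, ← Real.rpow_mul (abs_nonneg s)]
    ring_nf
  rw [hs]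
  exact mul_le_mul_rpow_one_add_add hA hB hq (sq_nonneg s)

lemma setIntegral_le_setIntegral_add_mul_measureReal {α : Type*} [MeasurableSpace α]
    {μ : Measure α} {s : Set α} (hs : μ s ≠ ⊤) {f g : α → ℝ} {c : ℝ}
    (hf : IntegrableOn f s μ) (hg : IntegrableOn g s μ) (h : ∀ x, f x ≤ g x + c) :
    ∫ x in s, f x ∂μ ≤ ∫ x in s, g x ∂μ + c * μ.real s := by
  have hc : IntegrableOn (fun _ => c) s μ := integrableOn_const hs
  calc ∫ x in s, f x ∂μ ≤ ∫ x in s, (g x + c) ∂μ := integral_mono hf (hg.add hc) h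
    _ = ∫ x in s, g x ∂μ + c * μ.real s := by
      rw [integral_add hg hc, setIntegral_const, smul_eq_mul, mul_comm]

section TranslationInvariant

variable {G : Type*} [AddCommGroup G] [MeasurableSpace G] [MeasurableAdd₂ G] [MeasurableNeg G]
  {μ : Measure G} [μ.IsAddLeftInvariant] {s : Set G}

lemma setIntegral_abs_comp_sub_le [μ.IsNegInvariant] {K : G → ℝ} (hK : Integrable K μ) (x : G) :
    ∫ y in s, |K (x - y)| ∂μ ≤ ∫ z, |K z| ∂μ :=
  (setIntegral_le_integral (hK.abs.comp_sub_left x) (.of_forall fun _ => abs_nonneg _)).trans_eq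
    (integral_sub_left_eq_self (fun z => |K z|) μ x)

lemma aestronglyMeasurable_comp_sub_prod_restrict [SFinite μ] {K : G → ℝ}
    (hK : AEStronglyMeasurable K μ) :
    AEStronglyMeasurable (fun p : G × G => K (p.1 - p.2)) ((μ.restrict s).prod (μ.restrict s)) := by
  rw [Measure.prod_restrict]
  exact (hK.comp_quasiMeasurePreserving
    (quasiMeasurePreserving_sub_of_right_invariant μ μ)).restrict

lemma integrable_prod_abs_comp_sub_mul [SFinite μ] [μ.IsNegInvariant] {K g : G → ℝ}
    (hK : Integrable K μ) (hg : Integrable g (μ.restrict s)) :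
    Integrable (fun p : G × G => |K (p.1 - p.2)| * g p.1) ((μ.restrict s).prod (μ.restrict s)) := by
  have hm : AEStronglyMeasurable (fun p : G × G => |K (p.1 - p.2)| * g p.1)
      ((μ.restrict s).prod (μ.restrict s)) :=
    (aestronglyMeasurable_comp_sub_prod_restrict hK.abs.aestronglyMeasurable).mul
      hg.aestronglyMeasurable.comp_fst
  refine (integrable_prod_iff hm).2
    ⟨.of_forall fun x => (hK.abs.comp_sub_left x).restrict.mul_const (g x), ?_⟩
  refine (hg.norm.const_mul (∫ z, |K z| ∂μ)).mono' hm.norm.integral_prod_right'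
    (.of_forall fun x => ?_)
  simp only [norm_mul, Real.norm_eq_abs, abs_abs, integral_mul_const]
  rw [abs_of_nonneg (by positivity)]
  exact mul_le_mul_of_nonneg_right (setIntegral_abs_comp_sub_le hK x) (abs_nonneg _)

lemma integral_prod_abs_comp_sub_mul_le [SFinite μ] [μ.IsNegInvariant] {K g : G → ℝ}
    (hK : Integrable K μ) (hg : Integrable g (μ.restrict s)) (hg0 : 0 ≤ g) :
    ∫ p, |K (p.1 - p.2)| * g p.1 ∂((μ.restrict s).prod (μ.restrict s)) ≤
      (∫ z, |K z| ∂μ) * ∫ x in s, g x ∂μ := by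
  rw [integral_prod _ (integrable_prod_abs_comp_sub_mul hK hg), ← integral_const_mul]
  refine integral_mono (integrable_prod_abs_comp_sub_mul hK hg).integral_prod_left
    (hg.const_mul _) fun x => ?_
  simp only [integral_mul_const]
  exact mul_le_mul_of_nonneg_right (setIntegral_abs_comp_sub_le hK x) (hg0 x)

lemma abs_mul_sub_sq_le (k a b : ℝ) :
    |k * (a - b) ^ 2| ≤ 2 * (|k| * a ^ 2) + 2 * (|k| * b ^ 2) := by
  rw [abs_mul, abs_sq]
  nlinarith [mul_nonneg (abs_nonneg k) (sq_nonneg (a + b))]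

lemma neg_le_integral_mul_sub_sq [SFinite μ] [μ.IsNegInvariant] {J φ : G → ℝ}
    (hJ : Integrable J μ) (hφ : MemLp φ 2 (μ.restrict s)) :
    -(4 * (∫ z, |J z| ∂μ) * ∫ x in s, φ x ^ 2 ∂μ) ≤
      ∫ x in s, ∫ y in s, J (x - y) * (φ x - φ y) ^ 2 ∂μ ∂μ := by
  set ν := (μ.restrict s).prod (μ.restrict s)
  have hφ2 : Integrable (fun x => φ x ^ 2) (μ.restrict s) := hφ.integrable_sq
  have hφ2_nonneg : 0 ≤ fun x => φ x ^ 2 := fun x => sq_nonneg (φ x)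
  have hJneg : Integrable (fun z => J (-z)) μ := hJ.comp_neg
  have hH₁ := integrable_prod_abs_comp_sub_mul hJ hφ2
  have hH₂ : Integrable (fun p : G × G => |J (p.1 - p.2)| * φ p.2 ^ 2) ν := by
    simpa [Function.comp_def, neg_sub] using (integrable_prod_abs_comp_sub_mul hJneg hφ2).swap
  have hI₁ : ∫ p, |J (p.1 - p.2)| * φ p.1 ^ 2 ∂ν ≤ (∫ z, |J z| ∂μ) * ∫ x in s, φ x ^ 2 ∂μ :=
    integral_prod_abs_comp_sub_mul_le hJ hφ2 hφ2_nonneg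
  have hI₂ : ∫ p, |J (p.1 - p.2)| * φ p.2 ^ 2 ∂ν ≤ (∫ z, |J z| ∂μ) * ∫ x in s, φ x ^ 2 ∂μ := by
    rw [← integral_prod_swap, ← integral_neg_eq_self (fun z => |J z|) μ]
    simpa [neg_sub] using integral_prod_abs_comp_sub_mul_le hJneg hφ2 hφ2_nonneg
  have hH := (hH₁.const_mul 2).add (hH₂.const_mul 2)
  have hint : Integrable (fun p : G × G => J (p.1 - p.2) * (φ p.1 - φ p.2) ^ 2) ν :=
    hH.mono' ((aestronglyMeasurable_comp_sub_prod_restrict hJ.aestronglyMeasurable).mul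
      ((hφ.aestronglyMeasurable.comp_fst.sub hφ.aestronglyMeasurable.comp_snd).pow 2))
      (.of_forall fun p => abs_mul_sub_sq_le _ _ _)
  calc -(4 * (∫ z, |J z| ∂μ) * ∫ x in s, φ x ^ 2 ∂μ)
      ≤ -∫ p, (2 * (|J (p.1 - p.2)| * φ p.1 ^ 2) + 2 * (|J (p.1 - p.2)| * φ p.2 ^ 2)) ∂ν := by
        rw [integral_add (hH₁.const_mul 2) (hH₂.const_mul 2), integral_const_mul,
          integral_const_mul]
        linarith
    _ ≤ ∫ p, J (p.1 - p.2) * (φ p.1 - φ p.2) ^ 2 ∂ν := by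
        rw [← integral_neg]
        exact integral_mono hH.neg hint fun p => neg_le_of_abs_le (abs_mul_sub_sq_le _ _ _)
    _ = ∫ x in s, ∫ y in s, J (x - y) * (φ x - φ y) ^ 2 ∂μ ∂μ := integral_prod _ hint

end TranslationInvariant

theorem stmt9_general (d : ℕ) (Ω : Set (EuclideanSpace ℝ (Fin d)))
    (hΩfin : volume Ω ≠ ⊤)
    (J : EuclideanSpace ℝ (Fin d) → ℝ) (hJ : Integrable J volume)
    (q c₆ c₇ : ℝ) (hq : 0 < q) (hc₆ : 0 < c₆) (hc₇ : 0 ≤ c₇)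
    (F : ℝ → ℝ)
    (hFcoer : ∀ s : ℝ, c₆ * |s| ^ (2 + 2 * q) - c₇ ≤ F s) :
    ∃ α > (0 : ℝ), ∃ c > (0 : ℝ),
      ∀ φ : EuclideanSpace ℝ (Fin d) → ℝ,
        MemLp φ (ENNReal.ofReal (2 + 2 * q)) (volume.restrict Ω) →
        IntegrableOn (fun x => F (φ x)) Ω →
        α * ((∫ x in Ω, φ x ^ 2) + ∫ x in Ω, F (φ x)) - c ≤
          (1 / 2 : ℝ) * (∫ x in Ω, ∫ y in Ω, J (x - y) * (φ x - φ y) ^ 2) +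
            2 * ∫ x in Ω, F (φ x) := by
  have : IsFiniteMeasure (volume.restrict Ω) := isFiniteMeasure_restrict.2 hΩfin
  set M := ∫ z, |J z|
  have hM : 0 ≤ M := integral_nonneg fun _ => abs_nonneg _
  -- Absorbing `(1 + 2 M) ∫ φ²` leaves `∫ φ²` after the loss `2 M ∫ φ²` in the double integral.
  have hA : 0 < 1 + 2 * M := by positivity
  refine ⟨1, one_pos, (c₇ + (1 + 2 * M) * ((1 + 2 * M) / c₆) ^ q⁻¹) * volume.real Ω + 1,
    by positivity, fun φ hφ hFφ => ?_⟩
  have hp : 0 < 2 + 2 * q := by positivity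
  have hφ2 : MemLp φ 2 (volume.restrict Ω) :=
    hφ.mono_exponent (by simpa using ENNReal.ofReal_le_ofReal (by linarith : (2 : ℝ) ≤ 2 + 2 * q))
  have hP : Integrable (fun x => |φ x| ^ (2 + 2 * q)) (volume.restrict Ω) := by
    simpa [ENNReal.toReal_ofReal hp.le] using
      hφ.integrable_norm_rpow (by simpa using hp) ENNReal.ofReal_ne_top
  have habsorb := setIntegral_le_setIntegral_add_mul_measureReal hΩfin
    (hφ2.integrable_sq.const_mul _) (hP.const_mul c₆)
    fun x => mul_sq_le_mul_abs_rpow_add hA hc₆ hq (φ x)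
  have hcoer := setIntegral_le_setIntegral_add_mul_measureReal (c := c₇) hΩfin
    (hP.const_mul c₆) hFφ fun x => by linarith [hFcoer (φ x)]
  have hdouble := neg_le_integral_mul_sub_sq hJ hφ2
  rw [integral_const_mul] at habsorb
  linarith

/-- coercivity of the nonlocal energy (estimate (3.9)). -/
theorem stmt9 (d : ℕ) (Ω : Set (EuclideanSpace ℝ (Fin d)))
    (hΩ : MeasurableSet Ω) (hΩfin : volume Ω ≠ ⊤)
    (J : EuclideanSpace ℝ (Fin d) → ℝ) (hJ : Integrable J volume)
    (hJeven : ∀ᵐ x : EuclideanSpace ℝ (Fin d) ∂volume, J (-x) = J x)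
    (a : EuclideanSpace ℝ (Fin d) → ℝ)
    (ha_def : ∀ x, a x = ∫ y in Ω, J (x - y))
    (ha_nonneg : ∀ᵐ x ∂(volume.restrict Ω), 0 ≤ a x)
    (q c₆ c₇ : ℝ) (hq : 0 < q) (hc₆ : 0 < c₆) (hc₇ : 0 ≤ c₇)
    (F : ℝ → ℝ) (hFcont : Continuous F)
    (hFcoer : ∀ s : ℝ, c₆ * |s| ^ (2 + 2 * q) - c₇ ≤ F s) :
    ∃ α > (0 : ℝ), ∃ c > (0 : ℝ),
      ∀ φ : EuclideanSpace ℝ (Fin d) → ℝ,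
        MemLp φ (ENNReal.ofReal (2 + 2 * q)) (volume.restrict Ω) →
        IntegrableOn (fun x => F (φ x)) Ω →
        α * ((∫ x in Ω, φ x ^ 2) + ∫ x in Ω, F (φ x)) - c ≤
          (1 / 2 : ℝ) * (∫ x in Ω, ∫ y in Ω, J (x - y) * (φ x - φ y) ^ 2) +
            2 * ∫ x in Ω, F (φ x) :=
  stmt9_general d Ω hΩfin J hJ q c₆ c₇ hq hc₆ hc₇ F hFcoer
end
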